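/- Let n ≥ 2, let Ω ⊆ ℝ^n be a smooth bounded domain, let C₂ > 0 and let 1 < q < n. Then there exists a constant C = C(n, q, Ω, C₂) < ∞ such that every nonnegative weak solution u ∈ A(Ω) of −Δ_n u = λ e^{u} in Ω with λ > 0 and λ ∫_Ω e^{u} dx ≤ C₂ satisfies ∫_Ω |∇u|^q dx ≤ C. -/

import Mathlib

open MeasureTheory Metric Set Filter Topology

noncomputable section

/-- `ω_{n-1}`: the surface measure of the unit sphere in `ℝ^n`, i.e. `n · vol(B^n)`. -/
def surf (n : ℕ) : ℝ :=
  n * (volume (ball (0 : EuclideanSpace ℝ (Fin n)) 1)).toReal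

/-- `α_n = n ω_{n-1}^{1/(n-1)}`. -/
def alphaN (n : ℕ) : ℝ := n * surf n ^ ((1 : ℝ) / ((n : ℝ) - 1))

/-- `C_n = (n²/(n-1))^{n-1} ω_{n-1}`. -/
def CN (n : ℕ) : ℝ := (((n : ℝ) ^ 2) / ((n : ℝ) - 1)) ^ ((n : ℝ) - 1) * surf n

/-- `β_n = n (n²/(n-1))^{n-1}`. -/
def betaN (n : ℕ) : ℝ := n * (((n : ℝ) ^ 2) / ((n : ℝ) - 1)) ^ ((n : ℝ) - 1)

/-- `η₀(x) = ln(β_n / (1+|x|^{n/(n-1)})^n)`. -/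
def eta0 (n : ℕ) (x : EuclideanSpace ℝ (Fin n)) : ℝ :=
  Real.log (betaN n / (1 + ‖x‖ ^ ((n : ℝ) / ((n : ℝ) - 1))) ^ (n : ℝ))

/-- The class `A(Ω)`: continuous on `closure Ω`, C¹ in `Ω`, vanishing on `∂Ω`,
with finite `n`-Dirichlet energy. -/
structure MemA (n : ℕ) (Ω : Set (EuclideanSpace ℝ (Fin n)))
    (u : EuclideanSpace ℝ (Fin n) → ℝ) : Prop where
  contOn : ContinuousOn u (closure Ω)
  diff : ∀ x ∈ Ω, DifferentiableAt ℝ u x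
  gradCont : ContinuousOn (gradient u) Ω
  boundary : ∀ x ∈ frontier Ω, u x = 0
  energy : IntegrableOn (fun x => ‖gradient u x‖ ^ (n : ℝ)) Ω volume

/-- `u` is a weak solution of `-Δ_n u = f` in `Ω`. -/
def IsWeakSol (n : ℕ) (Ω : Set (EuclideanSpace ℝ (Fin n)))
    (u f : EuclideanSpace ℝ (Fin n) → ℝ) : Prop :=
  ∀ φ : EuclideanSpace ℝ (Fin n) → ℝ, ContDiff ℝ 1 φ → HasCompactSupport φ →
    tsupport φ ⊆ Ω →
    (∫ x in Ω, ‖gradient u x‖ ^ ((n : ℝ) - 2) * (inner ℝ (gradient u x) (gradient φ x) : ℝ)) =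
      ∫ x in Ω, f x * φ x

/-- `x` is a blow-up point of the sequence `u`: for every `r>0`,
`limsup_k sup_{B(x,r) ∩ Ω} u_k = +∞`. -/
def IsBlowUpPt (n : ℕ) (Ω : Set (EuclideanSpace ℝ (Fin n)))
    (u : ℕ → EuclideanSpace ℝ (Fin n) → ℝ) (x : EuclideanSpace ℝ (Fin n)) : Prop :=
  ∀ r > 0, ∀ M : ℝ, ∀ K : ℕ, ∃ k ≥ K, ∃ y ∈ ball x r ∩ Ω, M < u k y

/-- `J_ρ(u) = (1/(nρ)) ∫_Ω |∇u|^n - ln ∫_Ω e^u`. -/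
def Jfun (n : ℕ) (Ω : Set (EuclideanSpace ℝ (Fin n))) (ρ : ℝ)
    (u : EuclideanSpace ℝ (Fin n) → ℝ) : ℝ :=
  (1 / (n * ρ)) * ∫ x in Ω, ‖gradient u x‖ ^ (n : ℝ) -
    Real.log (∫ x in Ω, Real.exp (u x))


open scoped NNReal ENNReal

/-!
Testing the equation with `C¹` truncations of `u` gives the layer energy bound
`∫_{u ≤ t} |∇u|^n ≤ (t + 1) λ ∫ e^u ≤ (t + 1) C₂`. Feeding the truncation of `u` at height `t` into
the Gagliardo–Nirenberg–Sobolev inequality, this makes `|{u ≥ t}|` decay like any prescribed power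
of `t`. On the layer `{j ≤ u < j + 1}`, Young's inequality
`|∇u|^q ≤ ε |∇u|^n + ε^{-q/(n-q)}` with `ε = (j + 1)⁻³` then bounds `∫ |∇u|^q` by a multiple of
`(j + 1)⁻²`, and these bounds are summable.
-/

lemma Real.rpow_le_mul_rpow_add_rpow {r ε q N : ℝ} (hr : 0 ≤ r) (hε : 0 < ε) (hq : 0 < q)
    (hqN : q < N) : r ^ q ≤ ε * r ^ N + ε ^ (-(q / (N - q))) := by
  have hN : 0 < N := hq.trans hqN
  have hconj : (N / q).HolderConjugate (N / (N - q)) :=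
    (Real.holderConjugate_iff).2 ⟨(one_lt_div hq).2 hqN, by field_simp; ring⟩
  have hyoung := Real.young_inequality_of_nonneg (by positivity : 0 ≤ ε ^ (q / N) * r ^ q)
    (by positivity : 0 ≤ ε ^ (-(q / N))) hconj
  have hlhs : ε ^ (q / N) * r ^ q * ε ^ (-(q / N)) = r ^ q := by
    rw [mul_right_comm, ← Real.rpow_add hε, add_neg_cancel, Real.rpow_zero, one_mul]
  have h₁ : (ε ^ (q / N) * r ^ q) ^ (N / q) = ε * r ^ N := by
    rw [Real.mul_rpow (by positivity) (by positivity), ← Real.rpow_mul hε.le,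
      ← Real.rpow_mul hr]
    field_simp
    simp [mul_comm]
  have h₂ : (ε ^ (-(q / N))) ^ (N / (N - q)) = ε ^ (-(q / (N - q))) := by
    rw [← Real.rpow_mul hε.le]
    congr 1
    field_simp
  rw [hlhs, h₁, h₂] at hyoung
  have hA : ε * r ^ N / (N / q) ≤ ε * r ^ N :=
    div_le_self (by positivity) ((one_le_div hq).2 hqN.le)
  have hB : ε ^ (-(q / (N - q))) / (N / (N - q)) ≤ ε ^ (-(q / (N - q))) :=
    div_le_self (by positivity) ((one_le_div (by linarith)).2 (by linarith))
  linarith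

lemma setIntegral_rpow_norm_le {X E : Type*} [MeasurableSpace X] [NormedAddCommGroup E]
    {μ : Measure X} {A : Set X} {f : X → E} {ε q N : ℝ} (hμA : μ A ≠ ∞)
    (hf : IntegrableOn (fun x => ‖f x‖ ^ N) A μ) (hε : 0 < ε) (hq : 0 < q) (hqN : q < N) :
    ∫ x in A, ‖f x‖ ^ q ∂μ ≤ ε * ∫ x in A, ‖f x‖ ^ N ∂μ + ε ^ (-(q / (N - q))) * μ.real A := by
  calc ∫ x in A, ‖f x‖ ^ q ∂μ ≤ ∫ x in A, (ε * ‖f x‖ ^ N + ε ^ (-(q / (N - q)))) ∂μ :=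
        integral_mono_of_nonneg (ae_of_all _ fun _ => by positivity)
          ((hf.const_mul ε).add (integrableOn_const hμA))
          (ae_of_all _ fun x => Real.rpow_le_mul_rpow_add_rpow (norm_nonneg _) hε hq hqN)
    _ = _ := by
        rw [integral_add (hf.const_mul ε) (integrableOn_const hμA), integral_const_mul,
          setIntegral_const, smul_eq_mul, mul_comm (μ.real A)]

lemma ofReal_rpow_mul_measure_le_eLpNorm {X : Type*} [MeasurableSpace X] {μ : Measure X}
    {v : X → ℝ} {S : Set X} {c : ℝ} {r : ℝ≥0} (hr : r ≠ 0) (hv : AEStronglyMeasurable v μ)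
    (hS : ∀ x ∈ S, c ≤ v x) : ENNReal.ofReal c ^ (r : ℝ) * μ S ≤ eLpNorm v r μ ^ (r : ℝ) := by
  have h := mul_meas_ge_le_pow_eLpNorm' μ (by simpa using hr) ENNReal.coe_ne_top hv
    (ENNReal.ofReal c)
  rw [ENNReal.coe_toReal] at h
  refine le_trans (mul_le_mul_right (measure_mono fun x hx => ?_) _) h
  exact (ENNReal.ofReal_le_ofReal (hS x hx)).trans (Real.ofReal_le_enorm (v x))

lemma hasSum_setIntegral_inter_preimage_Ico {X : Type*} [MeasurableSpace X] {μ : Measure X}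
    {Ω : Set X} {u g : X → ℝ} (hm : ∀ j : ℕ, MeasurableSet (Ω ∩ u ⁻¹' Ico (j : ℝ) (j + 1)))
    (hpos : ∀ x ∈ Ω, 0 ≤ u x) (hg : IntegrableOn g Ω μ) :
    HasSum (fun j : ℕ => ∫ x in Ω ∩ u ⁻¹' Ico (j : ℝ) (j + 1), g x ∂μ) (∫ x in Ω, g x ∂μ) := by
  have hunion : ⋃ j : ℕ, Ω ∩ u ⁻¹' Ico (j : ℝ) (j + 1) = Ω := by
    refine Subset.antisymm (iUnion_subset fun _ => inter_subset_left) fun x hx => ?_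
    exact mem_iUnion.2 ⟨⌊u x⌋₊, hx, Nat.floor_le (hpos x hx), Nat.lt_floor_add_one _⟩
  have hd : Pairwise (Function.onFun Disjoint fun j : ℕ => Ω ∩ u ⁻¹' Ico (j : ℝ) (j + 1)) := by
    refine fun j k hjk => disjoint_left.2 fun x hj hk => hjk ?_
    have hx := hpos x hj.1
    exact ((Nat.floor_eq_iff hx).2 hj.2).symm.trans ((Nat.floor_eq_iff hx).2 hk.2)
  have h := hasSum_integral_iUnion hm hd (by rwa [hunion])
  rwa [hunion] at h

lemma norm_rpow_sub_two_mul_inner_smul {E : Type*} [NormedAddCommGroup E] [InnerProductSpace ℝ E]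
    {N : ℝ} (hN : N ≠ 0) (c : ℝ) (g : E) :
    ‖g‖ ^ (N - 2) * inner ℝ g (c • g) = c * ‖g‖ ^ N := by
  rw [real_inner_smul_right, real_inner_self_eq_norm_sq]
  rcases (norm_nonneg g).eq_or_lt with h | h
  · simp [← h, Real.zero_rpow hN]
  · rw [mul_left_comm, ← Real.rpow_natCast, ← Real.rpow_add h]
    norm_num

lemma rpow_neg_three_mul_add_le {τ c D κ : ℝ} (hτ : 1 ≤ τ) (hc : 0 ≤ c) :
    τ ^ (-3 : ℝ) * ((τ + 1) * c) + (τ ^ (-3 : ℝ)) ^ (-κ) * (D * τ ^ (-(3 * κ + 2))) ≤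
      (2 * c + D) * τ ^ (-2 : ℝ) := by
  have hτ0 : 0 < τ := by linarith
  have h₁ : τ ^ (-3 : ℝ) * ((τ + 1) * c) ≤ 2 * c * τ ^ (-2 : ℝ) := by
    have e : τ ^ (-2 : ℝ) = τ ^ (-3 : ℝ) * τ := by
      rw [← Real.rpow_add_one hτ0.ne']; norm_num
    rw [e]
    nlinarith [mul_nonneg (mul_nonneg hc (Real.rpow_nonneg hτ0.le (-3 : ℝ))) (sub_nonneg.2 hτ)]
  have h₂ : (τ ^ (-3 : ℝ)) ^ (-κ) * (D * τ ^ (-(3 * κ + 2))) = D * τ ^ (-2 : ℝ) := by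
    rw [← Real.rpow_mul hτ0.le, mul_left_comm, ← Real.rpow_add hτ0]
    ring_nf
  linarith

section Sobolev

open Module

variable {E F : Type*} [NormedAddCommGroup E] [NormedSpace ℝ E] [MeasurableSpace E] [BorelSpace E]
  [FiniteDimensional ℝ E] [NormedAddCommGroup F] [NormedSpace ℝ F] [FiniteDimensional ℝ F]
  (μ : Measure E) [μ.IsAddHaarMeasure]

variable (F) in
/-- The Gagliardo–Nirenberg–Sobolev constant for the exponent `p` with `p⁻¹ = r⁻¹ + N⁻¹`. -/
def sobolevConst (r : ℝ≥0) : ℝ≥0 :=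
  SNormLESNormFDerivOfEqConst F μ ((r⁻¹ + (finrank ℝ E : ℝ≥0)⁻¹)⁻¹ : ℝ≥0)

/-- Gagliardo–Nirenberg–Sobolev for `p⁻¹ = r⁻¹ + N⁻¹`, then Hölder between `p` and `N` on the set
where the derivative lives. -/
theorem eLpNorm_le_sobolevConst_mul (hE : 2 ≤ finrank ℝ E) {r : ℝ≥0} (hr : 2 ≤ r) {φ : E → F}
    {W : Set E} (hφ : ContDiff ℝ 1 φ) (hφc : HasCompactSupport φ)
    (hφW : ∀ x ∉ W, fderiv ℝ φ x = 0) :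
    eLpNorm φ r μ ≤
      sobolevConst F μ r * eLpNorm (fderiv ℝ φ) (finrank ℝ E) μ * μ W ^ (r : ℝ)⁻¹ := by
  set N := finrank ℝ E
  have hN : (2 : ℝ) ≤ N := by exact_mod_cast hE
  have hr' : (2 : ℝ) ≤ r := by exact_mod_cast hr
  set p : ℝ≥0 := ((r : ℝ≥0)⁻¹ + (N : ℝ≥0)⁻¹)⁻¹
  have hp : (p : ℝ)⁻¹ = (r : ℝ)⁻¹ + (N : ℝ)⁻¹ := by simp [p]
  have hp0 : 0 < (p : ℝ) := by rw [← inv_pos, hp]; positivity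
  have hp1 : 1 ≤ p := by
    rw [← NNReal.coe_le_coe, NNReal.coe_one, ← inv_le_inv₀ hp0 one_pos, hp, inv_one]
    linarith [inv_anti₀ two_pos hN, inv_anti₀ two_pos hr']
  have hpN : (p : ℝ≥0∞) ≤ N := by
    have : (p : ℝ) ≤ N := by
      rw [← inv_le_inv₀ (by positivity) hp0, hp]
      linarith [inv_nonneg.2 r.coe_nonneg]
    exact_mod_cast this
  have hsupp : (fun x => ‖fderiv ℝ φ x‖).support ⊆ W := fun x hx =>
    by_contra fun hxW => hx (by simp [hφW x hxW])
  calc eLpNorm φ r μ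
      ≤ sobolevConst F μ r * eLpNorm (fderiv ℝ φ) p μ :=
        eLpNorm_le_eLpNorm_fderiv_of_eq μ hφ hφc hp1 (by omega)
          (by rw [NNReal.coe_inv, hp]; ring)
    _ = sobolevConst F μ r * eLpNorm (fun x => ‖fderiv ℝ φ x‖) p (μ.restrict W) := by
        rw [eLpNorm_restrict_eq_of_support_subset hsupp, eLpNorm_norm]
    _ ≤ sobolevConst F μ r * (eLpNorm (fun x => ‖fderiv ℝ φ x‖) N (μ.restrict W) *
          μ.restrict W univ ^ (1 / (p : ℝ) - 1 / N)) := by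
        gcongr
        simpa only [ENNReal.coe_toReal, ENNReal.toReal_natCast] using
          eLpNorm_le_eLpNorm_mul_rpow_measure_univ (μ := μ.restrict W) hpN
            (hφ.continuous_fderiv one_ne_zero).norm.aestronglyMeasurable
    _ ≤ sobolevConst F μ r * eLpNorm (fderiv ℝ φ) N μ * μ W ^ (r : ℝ)⁻¹ := by
        rw [Measure.restrict_apply_univ, one_div, one_div, hp, add_sub_cancel_right, mul_assoc,
          ← eLpNorm_norm (f := fderiv ℝ φ)]
        gcongr
        exact Measure.restrict_le_self

end Sobolev

/-- `smoothTrunc a t` is a `C¹` stand-in for the truncation `s ↦ min (max (s - a) 0) (t - a)`: its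
slope `smoothTruncDeriv a t` is `1` on `[a, t]` and `0` outside `[a / 2, t + 1]`. As it vanishes for
`s ≤ a / 2`, composing it with a function of `A(Ω)` gives an admissible test function. -/
def smoothTruncDeriv (a t s : ℝ) : ℝ :=
  Real.smoothTransition ((2 * s - a) / a) * Real.smoothTransition (t + 1 - s)

def smoothTrunc (a t s : ℝ) : ℝ := ∫ τ in (0 : ℝ)..s, smoothTruncDeriv a t τ

namespace smoothTrunc

variable {a t : ℝ}

lemma continuous_deriv (a t : ℝ) : Continuous (smoothTruncDeriv a t) := by
  unfold smoothTruncDeriv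
  fun_prop

lemma deriv_nonneg (s : ℝ) : 0 ≤ smoothTruncDeriv a t s :=
  mul_nonneg (Real.smoothTransition.nonneg _) (Real.smoothTransition.nonneg _)

lemma deriv_le_one (s : ℝ) : smoothTruncDeriv a t s ≤ 1 :=
  mul_le_one₀ (Real.smoothTransition.le_one _) (Real.smoothTransition.nonneg _)
    (Real.smoothTransition.le_one _)

lemma deriv_eq_zero_of_le (ha : 0 < a) {s : ℝ} (hs : s ≤ a / 2) : smoothTruncDeriv a t s = 0 := by
  have : (2 * s - a) / a ≤ 0 := div_nonpos_of_nonpos_of_nonneg (by linarith) ha.le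
  simp [smoothTruncDeriv, Real.smoothTransition.zero_of_nonpos this]

lemma deriv_eq_zero_of_ge {s : ℝ} (hs : t + 1 ≤ s) : smoothTruncDeriv a t s = 0 := by
  simp [smoothTruncDeriv, Real.smoothTransition.zero_of_nonpos (show t + 1 - s ≤ 0 by linarith)]

lemma deriv_eq_one (ha : 0 < a) {s : ℝ} (has : a ≤ s) (hst : s ≤ t) :
    smoothTruncDeriv a t s = 1 := by
  have h₁ : 1 ≤ (2 * s - a) / a := (le_div_iff₀ ha).2 (by linarith)
  have h₂ : 1 ≤ t + 1 - s := by linarith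
  simp [smoothTruncDeriv, Real.smoothTransition.one_of_one_le h₁,
    Real.smoothTransition.one_of_one_le h₂]

lemma intervalIntegrable_deriv (b c : ℝ) :
    IntervalIntegrable (smoothTruncDeriv a t) volume b c :=
  (continuous_deriv a t).intervalIntegrable b c

lemma hasDerivAt (s : ℝ) : HasDerivAt (smoothTrunc a t) (smoothTruncDeriv a t s) s :=
  intervalIntegral.integral_hasDerivAt_right (intervalIntegrable_deriv 0 s)
    ((continuous_deriv a t).stronglyMeasurableAtFilter _ _) (continuous_deriv a t).continuousAt

lemma contDiff : ContDiff ℝ 1 (smoothTrunc a t) := by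
  rw [contDiff_one_iff_deriv]
  refine ⟨fun s => (hasDerivAt s).differentiableAt, ?_⟩
  simpa only [funext fun s => (hasDerivAt (a := a) (t := t) s).deriv] using continuous_deriv a t

lemma sub_eq_integral (b c : ℝ) :
    smoothTrunc a t c - smoothTrunc a t b = ∫ τ in b..c, smoothTruncDeriv a t τ :=
  intervalIntegral.integral_interval_sub_left (intervalIntegrable_deriv 0 c)
    (intervalIntegrable_deriv 0 b)

lemma monotone : Monotone (smoothTrunc a t) := fun b c hbc => by
  have h := intervalIntegral.integral_nonneg (μ := volume) hbc
    fun τ _ => deriv_nonneg (a := a) (t := t) τ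
  linarith [sub_eq_integral (a := a) (t := t) b c]

lemma eq_zero (ha : 0 < a) {s : ℝ} (hs : s ≤ a / 2) : smoothTrunc a t s = 0 := by
  refine intervalIntegral.integral_zero_ae (Eventually.of_forall fun τ hτ => ?_)
  refine deriv_eq_zero_of_le ha ?_
  rcases le_total 0 s with h | h
  · rw [uIoc_of_le h] at hτ; exact hτ.2.trans hs
  · rw [uIoc_of_ge h] at hτ; linarith [hτ.2]

lemma apply_sub_apply_le {b c : ℝ} (hbc : b ≤ c) :
    smoothTrunc a t c - smoothTrunc a t b ≤ c - b := by
  rw [sub_eq_integral]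
  simpa using intervalIntegral.integral_mono_on hbc (intervalIntegrable_deriv b c)
    intervalIntegrable_const fun τ _ => deriv_le_one (a := a) (t := t) τ

lemma eq_of_ge {s : ℝ} (hs : t + 1 ≤ s) : smoothTrunc a t s = smoothTrunc a t (t + 1) := by
  rw [← sub_eq_zero, sub_eq_integral]
  refine intervalIntegral.integral_zero_ae (Eventually.of_forall fun τ hτ => ?_)
  rw [uIoc_of_le hs] at hτ
  exact deriv_eq_zero_of_ge hτ.1.le

lemma le_add_one (ha : 0 < a) (ht : 0 ≤ t) (s : ℝ) : smoothTrunc a t s ≤ t + 1 := by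
  have h₀ : smoothTrunc a t 0 = 0 := eq_zero ha (by linarith)
  calc smoothTrunc a t s ≤ smoothTrunc a t (max s (t + 1)) := monotone (le_max_left _ _)
    _ = smoothTrunc a t (t + 1) := eq_of_ge (le_max_right _ _)
    _ ≤ t + 1 := by linarith [apply_sub_apply_le (a := a) (t := t) (by linarith : (0 : ℝ) ≤ t + 1)]

lemma sub_le_apply (ha : 0 < a) (hat : a ≤ t) {s : ℝ} (hs : t ≤ s) : t - a ≤ smoothTrunc a t s := by
  have h₀ : smoothTrunc a t 0 = 0 := eq_zero ha (by linarith)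
  have hat' : smoothTrunc a t t - smoothTrunc a t a = t - a := by
    rw [sub_eq_integral, intervalIntegral.integral_congr (g := fun _ => (1 : ℝ))]
    · simp
    · intro τ hτ
      rw [uIcc_of_le hat] at hτ
      exact deriv_eq_one ha hτ.1 hτ.2
  linarith [monotone (a := a) (t := t) hs, monotone (a := a) (t := t) ha.le]

end smoothTrunc

namespace MemA

variable {n : ℕ} {Ω : Set (EuclideanSpace ℝ (Fin n))} {u : EuclideanSpace ℝ (Fin n) → ℝ}

lemma measurableSet_inter_preimage (hΩo : IsOpen Ω) (hu : MemA n Ω u) {T : Set ℝ}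
    (hT : MeasurableSet T) : MeasurableSet (Ω ∩ u ⁻¹' T) := by
  classical
  have hm : Measurable (Ω.piecewise u 0) :=
    (hu.contOn.mono subset_closure).measurable_piecewise continuousOn_const hΩo.measurableSet
  convert hΩo.measurableSet.inter (hm hT) using 1
  ext x
  constructor <;> rintro ⟨hx, hxT⟩ <;> simp_all

lemma integrableOn_comp (hΩb : Bornology.IsBounded Ω) (hu : MemA n Ω u) {G : ℝ → ℝ}
    (hG : Continuous G) : IntegrableOn (fun x => G (u x)) Ω :=
  ((hG.comp_continuousOn hu.contOn).integrableOn_compact hΩb.isCompact_closure).mono_set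
    subset_closure

lemma memLp_gradient (hn : n ≠ 0) (hΩo : IsOpen Ω) (hu : MemA n Ω u) :
    MemLp (gradient u) n (volume.restrict Ω) := by
  rw [← integrable_norm_rpow_iff
    (hu.gradCont.aemeasurable hΩo.measurableSet).aestronglyMeasurable (by simpa using hn)
    (ENNReal.natCast_ne_top n), ENNReal.toReal_natCast]
  exact hu.energy

lemma integrableOn_rpow_norm_gradient (hn : n ≠ 0) (hΩo : IsOpen Ω)
    (hΩb : Bornology.IsBounded Ω) (hu : MemA n Ω u) {q : ℝ} (hq : 0 < q) (hqn : q ≤ n) :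
    IntegrableOn (fun x => ‖gradient u x‖ ^ q) Ω := by
  have : IsFiniteMeasure (volume.restrict Ω) := isFiniteMeasure_restrict.2 hΩb.measure_lt_top.ne
  have h := ((hu.memLp_gradient hn hΩo).mono_exponent (p := ENNReal.ofReal q)
    (by simpa using ENNReal.ofReal_le_ofReal hqn)).integrable_norm_rpow'
  rwa [ENNReal.toReal_ofReal hq.le] at h

lemma eLpNorm_indicator_gradient (hn : n ≠ 0) (hΩo : IsOpen Ω) (hu : MemA n Ω u)
    {A : Set (EuclideanSpace ℝ (Fin n))} (hA : MeasurableSet A) (hAΩ : A ⊆ Ω) :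
    eLpNorm (A.indicator (gradient u)) n volume =
      ENNReal.ofReal ((∫ x in A, ‖gradient u x‖ ^ (n : ℝ)) ^ (n : ℝ)⁻¹) := by
  have hA' := (hu.memLp_gradient hn hΩo).mono_measure (Measure.restrict_mono hAΩ le_rfl)
  rw [eLpNorm_indicator_eq_eLpNorm_restrict hA, hA'.eLpNorm_eq_integral_rpow_norm
    (by simpa using hn) (ENNReal.natCast_ne_top n), ENNReal.toReal_natCast]

lemma closure_inter_preimage_Ici_subset (hΩo : IsOpen Ω) (hu : MemA n Ω u) {b : ℝ}
    (hb : 0 < b) : closure Ω ∩ u ⁻¹' Ici b ⊆ Ω := by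
  rintro x ⟨hxc, hxb⟩
  by_contra hxΩ
  have := hu.boundary x (by rw [hΩo.frontier_eq]; exact ⟨hxc, hxΩ⟩)
  simp only [mem_preimage, mem_Ici, this] at hxb
  linarith

lemma contDiffAt (hΩo : IsOpen Ω) (hu : MemA n Ω u) {x : EuclideanSpace ℝ (Fin n)}
    (hx : x ∈ Ω) : ContDiffAt ℝ 1 u x := by
  let toDual := InnerProductSpace.toDual ℝ (EuclideanSpace ℝ (Fin n))
  rw [contDiffAt_one_iff]
  exact ⟨fun y => toDual (gradient u y), Ω, hΩo.mem_nhds hx,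
    toDual.continuous.comp_continuousOn hu.gradCont,
    fun y hy => (hu.diff y hy).hasGradientAt.hasFDerivAt⟩

section Composition

variable {F : ℝ → ℝ} {b : ℝ}

lemma indicator_comp_eq_zero (hF : ∀ s ≤ b, F s = 0) {y : EuclideanSpace ℝ (Fin n)}
    (hy : y ∉ closure Ω ∩ u ⁻¹' Ici b) : Ω.indicator (F ∘ u) y = 0 := by
  by_cases hyΩ : y ∈ Ω
  · rw [indicator_of_mem hyΩ]
    exact hF _ (not_lt.1 fun h => hy ⟨subset_closure hyΩ, h.le⟩)
  · exact indicator_of_notMem hyΩ _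

lemma indicator_comp_eventuallyEq_zero (hΩo : IsOpen Ω) (hu : MemA n Ω u) (hb : 0 < b)
    (hF : ∀ s ≤ b, F s = 0) {x : EuclideanSpace ℝ (Fin n)} (hx : x ∉ Ω) :
    Ω.indicator (F ∘ u) =ᶠ[𝓝 x] 0 := by
  have hK : IsClosed (closure Ω ∩ u ⁻¹' Ici b) :=
    hu.contOn.preimage_isClosed_of_isClosed isClosed_closure isClosed_Ici
  exact eventually_of_mem (hK.isOpen_compl.mem_nhds fun hxK => hx
    (hu.closure_inter_preimage_Ici_subset hΩo hb hxK)) fun y hy => indicator_comp_eq_zero hF hy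

lemma indicator_comp_eventuallyEq (hΩo : IsOpen Ω) {x : EuclideanSpace ℝ (Fin n)} (hx : x ∈ Ω) :
    Ω.indicator (F ∘ u) =ᶠ[𝓝 x] F ∘ u :=
  eventually_of_mem (hΩo.mem_nhds hx) fun _ hy => indicator_of_mem hy _

lemma isTestFunction_indicator_comp (hΩo : IsOpen Ω) (hΩb : Bornology.IsBounded Ω)
    (hu : MemA n Ω u) (hF : ContDiff ℝ 1 F) (hb : 0 < b) (hF0 : ∀ s ≤ b, F s = 0) :
    ContDiff ℝ 1 (Ω.indicator (F ∘ u)) ∧ HasCompactSupport (Ω.indicator (F ∘ u)) ∧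
      tsupport (Ω.indicator (F ∘ u)) ⊆ Ω := by
  refine ⟨contDiff_iff_contDiffAt.2 fun x => ?_, ?_, fun x hxs => ?_⟩
  · by_cases hx : x ∈ Ω
    · exact (hF.contDiffAt.comp x (hu.contDiffAt hΩo hx)).congr_of_eventuallyEq
        (indicator_comp_eventuallyEq hΩo hx)
    · exact contDiffAt_const.congr_of_eventuallyEq
        (indicator_comp_eventuallyEq_zero hΩo hu hb hF0 hx)
  · exact HasCompactSupport.intro (hΩb.isCompact_closure.of_isClosed_subset
      (hu.contOn.preimage_isClosed_of_isClosed isClosed_closure isClosed_Ici) inter_subset_left)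
      fun y hy => indicator_comp_eq_zero hF0 hy
  · by_contra hx
    exact (notMem_tsupport_iff_eventuallyEq.2
      (indicator_comp_eventuallyEq_zero hΩo hu hb hF0 hx)) hxs

lemma hasGradientAt_indicator_comp (hΩo : IsOpen Ω) (hu : MemA n Ω u) {F' : ℝ}
    {x : EuclideanSpace ℝ (Fin n)} (hx : x ∈ Ω) (hF : HasDerivAt F F' (u x)) :
    HasGradientAt (Ω.indicator (F ∘ u)) (F' • gradient u x) x := by
  rw [hasGradientAt_iff_hasFDerivAt, map_smul]
  exact (hF.comp_hasFDerivAt x (hu.diff x hx).hasGradientAt.hasFDerivAt).congr_of_eventuallyEq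
    (indicator_comp_eventuallyEq hΩo hx)

lemma norm_fderiv_indicator_comp (hΩo : IsOpen Ω) (hu : MemA n Ω u) {F' : ℝ}
    {x : EuclideanSpace ℝ (Fin n)} (hx : x ∈ Ω) (hF : HasDerivAt F F' (u x)) :
    ‖fderiv ℝ (Ω.indicator (F ∘ u)) x‖ = |F'| * ‖gradient u x‖ := by
  rw [(hu.hasGradientAt_indicator_comp hΩo hx hF).hasFDerivAt.fderiv,
    LinearIsometryEquiv.norm_map, norm_smul, Real.norm_eq_abs]

lemma fderiv_indicator_comp_of_notMem (hΩo : IsOpen Ω) (hu : MemA n Ω u) (hb : 0 < b)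
    (hF : ∀ s ≤ b, F s = 0) {x : EuclideanSpace ℝ (Fin n)} (hx : x ∉ Ω) :
    fderiv ℝ (Ω.indicator (F ∘ u)) x = 0 := by
  rw [(hu.indicator_comp_eventuallyEq_zero hΩo hb hF hx).fderiv_eq]
  exact fderiv_const_apply 0

end Composition

lemma norm_fderiv_indicator_smoothTrunc_le (hΩo : IsOpen Ω) (hu : MemA n Ω u) {a T : ℝ}
    (ha : 0 < a) (x : EuclideanSpace ℝ (Fin n)) :
    ‖fderiv ℝ (Ω.indicator (smoothTrunc a T ∘ u)) x‖ ≤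
      ‖(Ω ∩ u ⁻¹' Iic (T + 1)).indicator (gradient u) x‖ := by
  by_cases hx : x ∈ Ω
  · rw [hu.norm_fderiv_indicator_comp hΩo hx (smoothTrunc.hasDerivAt _),
      abs_of_nonneg (smoothTrunc.deriv_nonneg _)]
    by_cases hxT : u x ≤ T + 1
    · rw [indicator_of_mem (show x ∈ Ω ∩ u ⁻¹' Iic (T + 1) from ⟨hx, hxT⟩)]
      exact mul_le_of_le_one_left (norm_nonneg _) (smoothTrunc.deriv_le_one _)
    · rw [smoothTrunc.deriv_eq_zero_of_ge (not_le.1 hxT).le, zero_mul]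
      exact norm_nonneg _
  · rw [hu.fderiv_indicator_comp_of_notMem hΩo (half_pos ha)
      (fun _ hs => smoothTrunc.eq_zero ha hs) hx, norm_zero]
    exact norm_nonneg _

/-- Chebyshev's inequality for `smoothTrunc a T ∘ u`, which is `≥ T - a` on `{u ≥ T}`, followed by
the Sobolev inequality. -/
lemma rpow_mul_measureReal_superlevel_le (hn : 2 ≤ n) (hΩo : IsOpen Ω)
    (hΩb : Bornology.IsBounded Ω) (hu : MemA n Ω u) {r : ℝ≥0} (hr : 2 ≤ r) {a T E : ℝ}
    (ha : 0 < a) (haT : a ≤ T)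
    (hE : ∫ x in Ω ∩ u ⁻¹' Iic (T + 1), ‖gradient u x‖ ^ (n : ℝ) ≤ E) :
    (T - a) ^ (r : ℝ) * volume.real (Ω ∩ u ⁻¹' Ici T) ≤
      (sobolevConst ℝ (volume : Measure (EuclideanSpace ℝ (Fin n))) r : ℝ) ^ (r : ℝ) *
        E ^ ((r : ℝ) / n) * volume.real Ω := by
  set v := Ω.indicator (smoothTrunc a T ∘ u)
  set W := Ω ∩ u ⁻¹' Iic (T + 1)
  have hn0 : n ≠ 0 := by omega
  have hr0 : (r : ℝ) ≠ 0 := by positivity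
  have hΩ : volume Ω ≠ ∞ := hΩb.measure_lt_top.ne
  have hE0 : 0 ≤ E :=
    (setIntegral_nonneg_of_ae_restrict (ae_of_all _ fun _ => by positivity)).trans hE
  obtain ⟨hv, hvc, -⟩ := hu.isTestFunction_indicator_comp hΩo hΩb smoothTrunc.contDiff
    (half_pos ha) fun _ hs => smoothTrunc.eq_zero ha hs
  have hvW : ∀ x ∉ W, fderiv ℝ v x = 0 := fun x hx => by
    have h := hu.norm_fderiv_indicator_smoothTrunc_le (T := T) hΩo ha x
    rwa [indicator_of_notMem hx, norm_zero, norm_le_zero_iff] at h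
  have hgrad : eLpNorm (fderiv ℝ v) n volume ≤ ENNReal.ofReal (E ^ (n : ℝ)⁻¹) := by
    refine (eLpNorm_mono (hu.norm_fderiv_indicator_smoothTrunc_le hΩo ha)).trans ?_
    rw [hu.eLpNorm_indicator_gradient hn0 hΩo
      (hu.measurableSet_inter_preimage hΩo measurableSet_Iic) inter_subset_left]
    gcongr
  have hcheb : ENNReal.ofReal (T - a) ^ (r : ℝ) * volume (Ω ∩ u ⁻¹' Ici T) ≤
      eLpNorm v r volume ^ (r : ℝ) :=
    ofReal_rpow_mul_measure_le_eLpNorm (by exact_mod_cast hr0) hv.continuous.aestronglyMeasurable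
      fun x ⟨hx, hxT⟩ => by
        simpa [v, indicator_of_mem hx] using smoothTrunc.sub_le_apply ha haT hxT
  have hsob := eLpNorm_le_sobolevConst_mul volume (by simpa using hn) hr hv hvc hvW
  rw [finrank_euclideanSpace_fin] at hsob
  have key : ENNReal.ofReal (T - a) ^ (r : ℝ) * volume (Ω ∩ u ⁻¹' Ici T) ≤
      (sobolevConst ℝ volume r : ℝ≥0∞) ^ (r : ℝ) * ENNReal.ofReal (E ^ (n : ℝ)⁻¹) ^ (r : ℝ) *
        volume Ω :=
    calc _ ≤ eLpNorm v r volume ^ (r : ℝ) := hcheb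
      _ ≤ ((sobolevConst ℝ volume r : ℝ≥0∞) * ENNReal.ofReal (E ^ (n : ℝ)⁻¹) *
            volume Ω ^ (r : ℝ)⁻¹) ^ (r : ℝ) := by
          gcongr
          exact hsob.trans (by gcongr; exact inter_subset_left)
      _ = _ := by
          rw [ENNReal.mul_rpow_of_nonneg _ _ r.coe_nonneg,
            ENNReal.mul_rpow_of_nonneg _ _ r.coe_nonneg, ENNReal.rpow_inv_rpow hr0]
  have := ENNReal.toReal_mono (by finiteness) key
  rwa [ENNReal.toReal_mul, ENNReal.toReal_mul, ENNReal.toReal_mul, ← ENNReal.toReal_rpow,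
    ← ENNReal.toReal_rpow, ← ENNReal.toReal_rpow, ENNReal.toReal_ofReal (by linarith),
    ENNReal.toReal_ofReal (by positivity), ← Real.rpow_mul hE0, inv_mul_eq_div] at this

lemma measureReal_superlevel_le (hn : 2 ≤ n) (hΩo : IsOpen Ω) (hΩb : Bornology.IsBounded Ω)
    (hu : MemA n Ω u) {r : ℝ≥0} (hr : 2 ≤ r) {K t : ℝ} (hK : 0 ≤ K) (ht : 1 ≤ t)
    (hE : ∫ x in Ω ∩ u ⁻¹' Iic (t + 1), ‖gradient u x‖ ^ (n : ℝ) ≤ (t + 1 + 1) * K) :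
    volume.real (Ω ∩ u ⁻¹' Ici t) ≤
      (4 * (sobolevConst ℝ (volume : Measure (EuclideanSpace ℝ (Fin n))) r : ℝ)) ^ (r : ℝ) *
        (2 * K) ^ ((r : ℝ) / n) * volume.real Ω * (t + 1) ^ ((r : ℝ) / n - r) := by
  set C : ℝ := (sobolevConst ℝ (volume : Measure (EuclideanSpace ℝ (Fin n))) r : ℝ)
  set s := volume.real (Ω ∩ u ⁻¹' Ici t)
  have hτ : 0 < t + 1 := by linarith
  have h := hu.rpow_mul_measureReal_superlevel_le hn hΩo hΩb hr (a := 1 / 2) (by norm_num)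
    (by linarith) hE
  have hlow : ((t + 1) / 4) ^ (r : ℝ) * s ≤ (t - 1 / 2) ^ (r : ℝ) * s := by
    gcongr
    linarith
  rw [Real.rpow_sub hτ, Real.mul_rpow (by norm_num) (by positivity), mul_div_assoc',
    le_div_iff₀ (by positivity)]
  calc s * (t + 1) ^ (r : ℝ) = 4 ^ (r : ℝ) * (((t + 1) / 4) ^ (r : ℝ) * s) := by
        rw [Real.div_rpow hτ.le (by norm_num)]
        field_simp
    _ ≤ 4 ^ (r : ℝ) * (C ^ (r : ℝ) * ((t + 1 + 1) * K) ^ ((r : ℝ) / n) * volume.real Ω) :=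
        mul_le_mul_of_nonneg_left (hlow.trans h) (by positivity)
    _ ≤ 4 ^ (r : ℝ) * (C ^ (r : ℝ) * (2 * K * (t + 1)) ^ ((r : ℝ) / n) * volume.real Ω) := by
        gcongr 4 ^ _ * (_ * ?_ * _)
        exact Real.rpow_le_rpow (by positivity) (by nlinarith) (by positivity)
    _ = _ := by rw [Real.mul_rpow (by positivity) hτ.le]; ring

lemma setIntegral_layer_rpow_norm_gradient_le (hΩb : Bornology.IsBounded Ω) (hu : MemA n Ω u)
    {q C₂ D : ℝ} (hq : 0 < q) (hqn : q < n) (hC₂ : 0 ≤ C₂)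
    (hE : ∀ t, 0 ≤ t → ∫ x in Ω ∩ u ⁻¹' Iic t, ‖gradient u x‖ ^ (n : ℝ) ≤ (t + 1) * C₂)
    (hD : ∀ t, 0 ≤ t → volume.real (Ω ∩ u ⁻¹' Ici t) ≤ D * (t + 1) ^ (-(3 * (q / (n - q)) + 2)))
    (j : ℕ) :
    ∫ x in Ω ∩ u ⁻¹' Ico (j : ℝ) (j + 1), ‖gradient u x‖ ^ q ≤
      (2 * C₂ + D) * ((j : ℝ) + 1) ^ (-2 : ℝ) := by
  set A := Ω ∩ u ⁻¹' Ico (j : ℝ) (j + 1)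
  set τ : ℝ := j + 1
  have hτ : 1 ≤ τ := by simp [τ]
  have hAΩ : A ⊆ Ω := inter_subset_left
  calc ∫ x in A, ‖gradient u x‖ ^ q
      ≤ τ ^ (-3 : ℝ) * (∫ x in A, ‖gradient u x‖ ^ (n : ℝ)) +
          (τ ^ (-3 : ℝ)) ^ (-(q / (n - q))) * volume.real A :=
        setIntegral_rpow_norm_le (hΩb.subset hAΩ).measure_lt_top.ne (hu.energy.mono_set hAΩ)
          (by positivity) hq hqn
    _ ≤ τ ^ (-3 : ℝ) * ((τ + 1) * C₂) +
          (τ ^ (-3 : ℝ)) ^ (-(q / (n - q))) * (D * τ ^ (-(3 * (q / (n - q)) + 2))) := by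
        gcongr
        · refine (setIntegral_mono_set (hu.energy.mono_set inter_subset_left)
            (ae_of_all _ fun _ => by positivity) ?_).trans (hE τ (by positivity))
          exact (inter_subset_inter_right _
            (preimage_mono (Ico_subset_Icc_self.trans Icc_subset_Iic_self))).eventuallyLE
        · exact (measureReal_mono (inter_subset_inter_right _ (preimage_mono Ico_subset_Ici_self))
            (hΩb.subset inter_subset_left).measure_lt_top.ne).trans (hD j j.cast_nonneg)
    _ ≤ _ := rpow_neg_three_mul_add_le hτ hC₂

end MemA

theorem exists_measureReal_superlevel_le {n : ℕ} {Ω : Set (EuclideanSpace ℝ (Fin n))}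
    (hn : 2 ≤ n) (hΩo : IsOpen Ω) (hΩb : Bornology.IsBounded Ω) {K : ℝ} (hK : 0 ≤ K) {m : ℝ}
    (hm : 0 ≤ m) :
    ∃ D : ℝ, ∀ u : EuclideanSpace ℝ (Fin n) → ℝ, MemA n Ω u →
      (∀ t, 0 ≤ t → ∫ x in Ω ∩ u ⁻¹' Iic t, ‖gradient u x‖ ^ (n : ℝ) ≤ (t + 1) * K) →
      ∀ t, 0 ≤ t → volume.real (Ω ∩ u ⁻¹' Ici t) ≤ D * (t + 1) ^ (-m) := by
  set r : ℝ≥0 := (max (2 * m) 2).toNNReal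
  have hr : (r : ℝ) = max (2 * m) 2 := Real.coe_toNNReal _ (by positivity)
  have hr2 : 2 ≤ r := by rw [← NNReal.coe_le_coe, hr]; exact le_max_right _ _
  have hrm : (r : ℝ) / n - r ≤ -m := by
    have : (r : ℝ) / n ≤ r / 2 :=
      div_le_div_of_nonneg_left r.coe_nonneg two_pos (by exact_mod_cast hn)
    linarith [le_max_left (2 * m) 2]
  set V := volume.real Ω
  set B := (4 * (sobolevConst ℝ (volume : Measure (EuclideanSpace ℝ (Fin n))) r : ℝ)) ^ (r : ℝ) *
    (2 * K) ^ ((r : ℝ) / n) * V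
  refine ⟨V * 2 ^ m + B, fun u hu hE t ht => ?_⟩
  have hτ : 0 < t + 1 := by linarith
  rcases lt_or_ge t 1 with ht1 | ht1
  · have h2 : (2 : ℝ) ^ (-m) ≤ (t + 1) ^ (-m) :=
      Real.rpow_le_rpow_of_nonpos hτ (by linarith) (by linarith)
    calc volume.real (Ω ∩ u ⁻¹' Ici t) ≤ V * 2 ^ m * 2 ^ (-m) := by
          rw [mul_assoc, ← Real.rpow_add two_pos, add_neg_cancel, Real.rpow_zero, mul_one]
          exact measureReal_mono inter_subset_left hΩb.measure_lt_top.ne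
      _ ≤ V * 2 ^ m * (t + 1) ^ (-m) := by gcongr
      _ ≤ _ := by gcongr; exact le_add_of_nonneg_right (by positivity)
  · calc volume.real (Ω ∩ u ⁻¹' Ici t) ≤ B * (t + 1) ^ ((r : ℝ) / n - r) :=
          hu.measureReal_superlevel_le hn hΩo hΩb hr2 hK ht1 (hE (t + 1) (by linarith))
      _ ≤ B * (t + 1) ^ (-m) := by gcongr; linarith
      _ ≤ _ := by gcongr; exact le_add_of_nonneg_left (by positivity)


namespace IsWeakSol

variable {n : ℕ} {Ω : Set (EuclideanSpace ℝ (Fin n))} {u f : EuclideanSpace ℝ (Fin n) → ℝ}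

lemma integral_deriv_comp_mul_rpow (hn : n ≠ 0) (hΩo : IsOpen Ω) (hΩb : Bornology.IsBounded Ω)
    (hu : MemA n Ω u) (hsol : IsWeakSol n Ω u f) {F F' : ℝ → ℝ}
    (hF : ContDiff ℝ 1 F) (hF' : ∀ s, HasDerivAt F (F' s) s) {b : ℝ} (hb : 0 < b)
    (hF0 : ∀ s ≤ b, F s = 0) :
    ∫ x in Ω, F' (u x) * ‖gradient u x‖ ^ (n : ℝ) = ∫ x in Ω, f x * F (u x) := by
  obtain ⟨hφ, hφc, hφΩ⟩ := hu.isTestFunction_indicator_comp hΩo hΩb hF hb hF0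
  calc ∫ x in Ω, F' (u x) * ‖gradient u x‖ ^ (n : ℝ)
      = ∫ x in Ω, ‖gradient u x‖ ^ ((n : ℝ) - 2) *
          inner ℝ (gradient u x) (gradient (Ω.indicator (F ∘ u)) x) :=
        setIntegral_congr_fun hΩo.measurableSet fun x hx => by
          rw [(hu.hasGradientAt_indicator_comp hΩo hx (hF' (u x))).gradient,
            norm_rpow_sub_two_mul_inner_smul (by exact_mod_cast hn)]
    _ = ∫ x in Ω, f x * Ω.indicator (F ∘ u) x := hsol _ hφ hφc hφΩ
    _ = ∫ x in Ω, f x * F (u x) := setIntegral_congr_fun hΩo.measurableSet fun x hx => by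
          rw [indicator_of_mem hx, Function.comp_apply]

variable {lam : ℝ}

lemma setIntegral_Icc_le (hn : n ≠ 0) (hΩo : IsOpen Ω) (hΩb : Bornology.IsBounded Ω)
    (hu : MemA n Ω u) (hlam : 0 ≤ lam) (hsol : IsWeakSol n Ω u fun x => lam * Real.exp (u x))
    {a t : ℝ} (ha : 0 < a) (ht : 0 ≤ t) :
    ∫ x in Ω ∩ u ⁻¹' Icc a t, ‖gradient u x‖ ^ (n : ℝ) ≤
      (t + 1) * (lam * ∫ x in Ω, Real.exp (u x)) := by
  have hg := smoothTrunc.continuous_deriv a t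
  have hint : IntegrableOn (fun x => smoothTruncDeriv a t (u x) * ‖gradient u x‖ ^ (n : ℝ)) Ω :=
    hu.energy.bdd_mul (c := 1)
      (hg.comp_aestronglyMeasurable
        ((hu.contOn.mono subset_closure).aestronglyMeasurable hΩo.measurableSet))
      (ae_of_all _ fun x => by
        rw [Real.norm_of_nonneg (smoothTrunc.deriv_nonneg _)]
        exact smoothTrunc.deriv_le_one _)
  calc ∫ x in Ω ∩ u ⁻¹' Icc a t, ‖gradient u x‖ ^ (n : ℝ)
      = ∫ x in Ω ∩ u ⁻¹' Icc a t, smoothTruncDeriv a t (u x) * ‖gradient u x‖ ^ (n : ℝ) :=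
        setIntegral_congr_fun (hu.measurableSet_inter_preimage hΩo measurableSet_Icc)
          fun x hx => by rw [smoothTrunc.deriv_eq_one ha hx.2.1 hx.2.2, one_mul]
    _ ≤ ∫ x in Ω, smoothTruncDeriv a t (u x) * ‖gradient u x‖ ^ (n : ℝ) :=
        setIntegral_mono_set hint
          (ae_of_all _ fun x => mul_nonneg (smoothTrunc.deriv_nonneg _) (by positivity))
          inter_subset_left.eventuallyLE
    _ = ∫ x in Ω, lam * Real.exp (u x) * smoothTrunc a t (u x) :=
        hsol.integral_deriv_comp_mul_rpow hn hΩo hΩb hu smoothTrunc.contDiff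
          smoothTrunc.hasDerivAt (half_pos ha) fun _ hs => smoothTrunc.eq_zero ha hs
    _ ≤ ∫ x in Ω, (t + 1) * (lam * Real.exp (u x)) := by
        refine setIntegral_mono_on ?_ ?_ hΩo.measurableSet fun x _ => ?_
        · simp only [mul_assoc]
          exact (hu.integrableOn_comp hΩb (G := fun s => Real.exp s * smoothTrunc a t s)
            (Real.continuous_exp.mul smoothTrunc.contDiff.continuous)).const_mul lam
        · exact ((hu.integrableOn_comp hΩb Real.continuous_exp).const_mul lam).const_mul _
        · rw [mul_comm _ (smoothTrunc a t _)]
          exact mul_le_mul_of_nonneg_right (smoothTrunc.le_add_one ha ht _) (by positivity)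
    _ = (t + 1) * (lam * ∫ x in Ω, Real.exp (u x)) := by
        rw [integral_const_mul, integral_const_mul]

lemma setIntegral_Iic_le (hn : n ≠ 0) (hΩo : IsOpen Ω) (hΩb : Bornology.IsBounded Ω)
    (hu : MemA n Ω u) (hpos : ∀ x ∈ Ω, 0 ≤ u x) (hlam : 0 ≤ lam)
    (hsol : IsWeakSol n Ω u fun x => lam * Real.exp (u x)) {t : ℝ} (ht : 0 ≤ t) :
    ∫ x in Ω ∩ u ⁻¹' Iic t, ‖gradient u x‖ ^ (n : ℝ) ≤
      (t + 1) * (lam * ∫ x in Ω, Real.exp (u x)) := by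
  let s : ℕ → Set (EuclideanSpace ℝ (Fin n)) := fun k => Ω ∩ u ⁻¹' Icc (1 / (k + 1)) t
  have hmono : Monotone s := fun k l hkl =>
    inter_subset_inter_right _ (preimage_mono (Icc_subset_Icc_left (by gcongr)))
  have hunion : ⋃ k, s k = Ω ∩ u ⁻¹' Ioc 0 t := by
    ext x
    simp only [s, mem_iUnion, mem_inter_iff, mem_preimage, mem_Icc, mem_Ioc]
    constructor
    · rintro ⟨k, hx, hk, hxt⟩
      exact ⟨hx, lt_of_lt_of_le (by positivity) hk, hxt⟩
    · rintro ⟨hx, hx0, hxt⟩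
      obtain ⟨k, hk⟩ := exists_nat_one_div_lt hx0
      exact ⟨k, hx, hk.le, hxt⟩
  -- `∇u` vanishes where the nonnegative `u` attains its minimum `0`
  have hzero : ∀ x ∈ (Ω ∩ u ⁻¹' Iic t) \ (Ω ∩ u ⁻¹' Ioc 0 t), ‖gradient u x‖ ^ (n : ℝ) = 0 := by
    rintro x ⟨⟨hx, hxt⟩, hx0⟩
    have hux : u x = 0 := le_antisymm (not_lt.1 fun h => hx0 ⟨hx, h, hxt⟩) (hpos x hx)
    have hmin : IsLocalMin u x := eventually_of_mem (hΩo.mem_nhds hx) fun y hy => by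
      rw [hux]; exact hpos y hy
    rw [gradient, hmin.fderiv_eq_zero, map_zero, norm_zero, Real.zero_rpow (by exact_mod_cast hn)]
  rw [setIntegral_eq_of_subset_of_forall_sdiff_eq_zero
      (hu.measurableSet_inter_preimage hΩo measurableSet_Iic)
      (inter_subset_inter_right _ (preimage_mono Ioc_subset_Iic_self)) hzero, ← hunion]
  refine le_of_tendsto' (tendsto_setIntegral_of_monotone
    (fun k => hu.measurableSet_inter_preimage hΩo measurableSet_Icc) hmono
    (hu.energy.mono_set (hunion ▸ inter_subset_left))) fun k => ?_
  exact hsol.setIntegral_Icc_le hn hΩo hΩb hu hlam (by positivity) ht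

end IsWeakSol

theorem stmt19_general (n : ℕ) (hn : 2 ≤ n)
    (Ω : Set (EuclideanSpace ℝ (Fin n))) (hΩo : IsOpen Ω)
    (hΩb : Bornology.IsBounded Ω)
    (C₂ : ℝ) (hC₂ : 0 < C₂) (q : ℝ) (hq1 : 1 < q) (hqn : q < n) :
    ∃ C : ℝ, ∀ lam : ℝ, 0 < lam →
      ∀ u : EuclideanSpace ℝ (Fin n) → ℝ, MemA n Ω u →
        (∀ x ∈ Ω, 0 ≤ u x) →
        IsWeakSol n Ω u (fun x => lam * Real.exp (u x)) →
        lam * ∫ x in Ω, Real.exp (u x) ≤ C₂ →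
        (∫ x in Ω, ‖gradient u x‖ ^ q) ≤ C := by
  have hn0 : n ≠ 0 := by omega
  have hq0 : 0 < q := by linarith
  have hnq : 0 < (n : ℝ) - q := by linarith
  obtain ⟨D, hD⟩ := exists_measureReal_superlevel_le hn hΩo hΩb hC₂.le
    (m := 3 * (q / (n - q)) + 2) (by positivity)
  have hsum : Summable fun j : ℕ => ((j : ℝ) + 1) ^ (-2 : ℝ) := by
    simpa using (summable_nat_add_iff 1).2 (Real.summable_nat_rpow.2 (by norm_num : (-2 : ℝ) < -1))
  refine ⟨(2 * C₂ + D) * ∑' j : ℕ, ((j : ℝ) + 1) ^ (-2 : ℝ),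
    fun lam hlam u hu hpos hsol hbound => ?_⟩
  have hE : ∀ t, 0 ≤ t → ∫ x in Ω ∩ u ⁻¹' Iic t, ‖gradient u x‖ ^ (n : ℝ) ≤ (t + 1) * C₂ :=
    fun t ht => (hsol.setIntegral_Iic_le hn0 hΩo hΩb hu hpos hlam.le ht).trans (by gcongr)
  exact hasSum_le (hu.setIntegral_layer_rpow_norm_gradient_le hΩb hq0 hqn hC₂.le hE (hD u hu hE))
    (hasSum_setIntegral_inter_preimage_Ico
      (fun j => hu.measurableSet_inter_preimage hΩo measurableSet_Ico) hpos
      (hu.integrableOn_rpow_norm_gradient hn0 hΩo hΩb hq0 hqn.le))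
    (hsum.hasSum.mul_left _)

theorem stmt19 (n : ℕ) (hn : 2 ≤ n)
    (Ω : Set (EuclideanSpace ℝ (Fin n))) (hΩo : IsOpen Ω)
    (hΩb : Bornology.IsBounded Ω) (hΩne : Ω.Nonempty)
    (C₂ : ℝ) (hC₂ : 0 < C₂) (q : ℝ) (hq1 : 1 < q) (hqn : q < n) :
    ∃ C : ℝ, ∀ lam : ℝ, 0 < lam →
      ∀ u : EuclideanSpace ℝ (Fin n) → ℝ, MemA n Ω u →
        (∀ x ∈ Ω, 0 ≤ u x) →
        IsWeakSol n Ω u (fun x => lam * Real.exp (u x)) →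
        lam * ∫ x in Ω, Real.exp (u x) ≤ C₂ →
        (∫ x in Ω, ‖gradient u x‖ ^ q) ≤ C :=
  stmt19_general n hn Ω hΩo hΩb C₂ hC₂ q hq1 hqn
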